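/- arXiv:2508.01642 — 5 statements merged into one kernel-verified Lean document; each statement's English description precedes it below -/
import Mathlib

section
/- Let (Ω, ℱ, P) be a probability space, let m ⊆ ℱ be a sub-σ-algebra, and let θ : Ω → ℝ be square-integrable. Define the Bayes estimator θ̂ = E[θ | m]. If θ̂ is unbiased in the Bayesian sense, i.e. E[θ̂ | σ(θ)] = θ almost surely, then θ̂ = θ almost surely. -/
open MeasureTheory


lemma sq_le_of_forall_rat {y G : ℝ} (h : ∀ c : ℚ, 2*(c:ℝ)*y - (c:ℝ)^2 ≤ G) : y^2 ≤ G := by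
  refine le_of_forall_pos_le_add fun ε hε => ?_
  obtain ⟨q, hq⟩ := exists_rat_near y (lt_min one_pos hε)
  have h2 := h q
  have h3 := abs_lt.mp hq
  have hm1 : min (1:ℝ) ε ≤ 1 := min_le_left _ _
  have hm2 : min (1:ℝ) ε ≤ ε := min_le_right _ _
  nlinarith [sq_nonneg (y - (q:ℝ))]

lemma condexp_sq_bound {Ω : Type*} {ℱ : MeasurableSpace Ω} {μ : Measure Ω} [IsProbabilityMeasure μ]
    {m : MeasurableSpace Ω} (hm : m ≤ ℱ) {θ : Ω → ℝ} (hθ : MemLp θ 2 μ) :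
    ∀ᵐ x ∂μ, (μ[θ|m]) x ^ 2 ≤ (μ[(fun y => θ y ^ 2)|m]) x := by
  have hθ1 : Integrable θ μ := hθ.integrable one_le_two
  have key : ∀ c : ℚ, ∀ᵐ x ∂μ,
      2*(c:ℝ)*(μ[θ|m]) x - (c:ℝ)^2 ≤ (μ[(fun y => θ y ^ 2)|m]) x := by
    intro c
    have hint : Integrable (fun x => 2*(c:ℝ)*θ x - (c:ℝ)^2) μ :=
      (hθ1.const_mul _).sub (integrable_const _)
    have hmono := condExp_mono (μ := μ) (m := m) hint hθ.integrable_sq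
      (Filter.Eventually.of_forall fun x => by simp only []; nlinarith [sq_nonneg (θ x - (c:ℝ))])
    have haff : μ[(fun x => 2*(c:ℝ)*θ x - (c:ℝ)^2)|m]
        =ᵐ[μ] fun x => 2*(c:ℝ)*(μ[θ|m]) x - (c:ℝ)^2 := by
      have h1 := condExp_sub (μ := μ) (m := m) (hθ1.const_mul (2*(c:ℝ))) (integrable_const ((c:ℝ)^2))
      have h2 : μ[(fun x => 2*(c:ℝ)*θ x)|m] =ᵐ[μ] fun x => 2*(c:ℝ)*(μ[θ|m]) x := by
        exact condExp_smul (μ := μ) (m := m) (2*(c:ℝ)) θ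
      have h3 : μ[(fun _ : Ω => (c:ℝ)^2)|m] = fun _ => (c:ℝ)^2 := condExp_const hm _
      calc μ[(fun x => 2*(c:ℝ)*θ x - (c:ℝ)^2)|m]
          =ᵐ[μ] μ[(fun x => 2*(c:ℝ)*θ x)|m] - μ[(fun _ => (c:ℝ)^2)|m] := h1
        _ =ᵐ[μ] fun x => 2*(c:ℝ)*(μ[θ|m]) x - (c:ℝ)^2 := by
            filter_upwards [h2] with x hx
            simp [hx, h3]
    filter_upwards [hmono, haff] with x hx1 hx2
    rw [← hx2]; exact hx1
  filter_upwards [ae_all_iff.mpr key] with x hx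
  exact sq_le_of_forall_rat hx

lemma memℒp_two_condexp {Ω : Type*} {ℱ : MeasurableSpace Ω} {μ : Measure Ω} [IsProbabilityMeasure μ]
    {m : MeasurableSpace Ω} (hm : m ≤ ℱ) {θ : Ω → ℝ} (hθ : MemLp θ 2 μ) :
    MemLp (μ[θ|m]) 2 μ := by
  have hmeas : AEStronglyMeasurable[ℱ] (μ[θ|m]) μ :=
    ((stronglyMeasurable_condExp (f := θ) (μ := μ)).mono hm).aestronglyMeasurable
  rw [memLp_two_iff_integrable_sq hmeas]
  refine Integrable.mono' (integrable_condExp (m := m) (f := fun y => θ y ^ 2)) (hmeas.pow 2) ?_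
  filter_upwards [condexp_sq_bound hm hθ] with x hx
  rw [Real.norm_eq_abs, abs_of_nonneg (sq_nonneg ((μ[θ|m]) x))]; exact hx

/-- Bayes estimators are biased: if the posterior mean `θ̂ = E[θ | m]` of a
square-integrable parameter `θ` is unbiased in the Bayesian sense,
`E[θ̂ | σ(θ)] = θ` a.s., then `θ̂ = θ` a.s. -/
theorem bayes_estimator_unbiased_implies_no_error
    {Ω : Type*} (m : MeasurableSpace Ω) {ℱ : MeasurableSpace Ω} (μ : Measure Ω) [IsProbabilityMeasure μ]
    (hm : m ≤ ℱ)
    (θ : Ω → ℝ) (hθmeas : Measurable θ) (hθ : MemLp θ 2 μ)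
    (hunbiased : μ[μ[θ|m] | MeasurableSpace.comap θ inferInstance] =ᵐ[μ] θ) :
    μ[θ|m] =ᵐ[μ] θ := by
  set f := μ[θ|m] with hf_def
  have hf : MemLp f 2 μ := memℒp_two_condexp hm hθ
  have hθ1 : Integrable θ μ := hθ.integrable one_le_two
  have hf1 : Integrable f μ := integrable_condExp
  set mθ : MeasurableSpace Ω := MeasurableSpace.comap θ inferInstance with hmθ_def
  have hmθ : mθ ≤ ℱ := hθmeas.comap_le
  -- integrability of products
  have hθf : Integrable (fun x => θ x * f x) μ := by
    have := hθ.smul (E := ℝ) (𝕜 := ℝ) hf (p := 2) (q := 2) (r := 1)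
    rw [memLp_one_iff_integrable] at this
    simpa [smul_eq_mul, Pi.mul_def, mul_comm] using this
  -- Step 1: ∫ θ f = ∫ f f
  have hfθmul : Integrable (f * θ) μ := by simpa [Pi.mul_def, mul_comm] using hθf
  have step1 : ∫ x, θ x * f x ∂μ = ∫ x, f x * f x ∂μ := by
    have h := condExp_mul_of_stronglyMeasurable_left (μ := μ) (m := m)
      stronglyMeasurable_condExp hfθmul hθ1
    calc ∫ x, θ x * f x ∂μ = ∫ x, (f * θ) x ∂μ := by
          simp [Pi.mul_apply, mul_comm]
      _ = ∫ x, (μ[f * θ|m]) x ∂μ := (integral_condExp hm).symm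
      _ = ∫ x, f x * f x ∂μ := by
          refine integral_congr_ae ?_
          filter_upwards [h] with x hx
          simpa using hx
  -- Step 2: ∫ θ f = ∫ θ θ
  have hθmeas' : StronglyMeasurable[mθ] θ :=
    (Measurable.of_comap_le le_rfl).stronglyMeasurable
  have hθfmul : Integrable (θ * f) μ := by simpa [Pi.mul_def] using hθf
  have step2 : ∫ x, θ x * f x ∂μ = ∫ x, θ x * θ x ∂μ := by
    have h := condExp_mul_of_stronglyMeasurable_left (μ := μ) (m := mθ) hθmeas' hθfmul hf1
    calc ∫ x, θ x * f x ∂μ = ∫ x, (θ * f) x ∂μ := by simp [Pi.mul_apply]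
      _ = ∫ x, (μ[θ * f|mθ]) x ∂μ := (integral_condExp hmθ).symm
      _ = ∫ x, θ x * θ x ∂μ := by
          refine integral_congr_ae ?_
          filter_upwards [h, hunbiased] with x hx hu
          simp only [Pi.mul_apply] at hx
          rw [hx, hu]
  -- expand the square
  have hsqint : Integrable (fun x => (θ x - f x)^2) μ := (hθ.sub hf).integrable_sq
  have hzero : ∫ x, (θ x - f x)^2 ∂μ = 0 := by
    have expand : ∀ x, (θ x - f x)^2 = θ x * θ x - 2*(θ x * f x) + f x * f x := by
      intro x; ring
    have hθθ : Integrable (fun x => θ x * θ x) μ := by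
      simpa [sq] using hθ.integrable_sq
    have hff : Integrable (fun x => f x * f x) μ := by
      simpa [sq] using hf.integrable_sq
    calc ∫ x, (θ x - f x)^2 ∂μ
        = ∫ x, (θ x * θ x - 2*(θ x * f x) + f x * f x) ∂μ := by
          exact integral_congr_ae (Filter.Eventually.of_forall fun x => expand x)
      _ = (∫ x, θ x * θ x ∂μ - ∫ x, 2*(θ x * f x) ∂μ) + ∫ x, f x * f x ∂μ := by
          have hA : Integrable (fun x => θ x * θ x - 2*(θ x * f x)) μ :=
            hθθ.sub (hθf.const_mul 2)
          rw [integral_add hA hff, integral_sub hθθ (hθf.const_mul 2)]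
      _ = 0 := by
          rw [integral_const_mul]
          rw [← step1, ← step2]; ring
  have hae : (fun x => (θ x - f x)^2) =ᵐ[μ] 0 := by
    rw [← integral_eq_zero_iff_of_nonneg (fun x => sq_nonneg _) hsqint]
    exact hzero
  filter_upwards [hae] with x hx
  have : (θ x - f x)^2 = 0 := hx
  have := pow_eq_zero_iff (n := 2) (by norm_num) |>.mp this
  linarith [sub_eq_zero.mp this]
end

section
/- Let f : [0,1] → ℝ satisfy the Hölder condition |f(x) − f(y)| ≤ c|x − y|^α for all x, y ∈ [0,1], where c > 0 and 0 < α ≤ 1. Let M ≥ 1 be an integer and let f̄ be the histogram approximation of f with M equal bins (the piecewise constant function whose value on each bin ((k−1)/M, k/M] is the average of f over that bin). Then ∫₀¹ (f(x) − f̄(x))² dx ≤ c² M^{−2α}. -/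
/-!
On the bin containing `x` the histogram `f̄` is the average of `f` over an interval of length
`1/M` containing `x`, so the Hölder condition gives `|f x - f̄ x| ≤ c M^{-α}` pointwise on `(0,1]`;
squaring and integrating over `(0,1]`, which has measure one, gives the bound.
-/

open MeasureTheory Set

/-- The histogram approximation of `f` on `[0,1]` with `M` equal bins: the piecewise
constant function whose value on the bin `((k−1)/M, k/M]` (here indexed by
`k - 1 ∈ {0, …, M−1}`) is the average of `f` over that bin. -/
noncomputable def histApprox (f : ℝ → ℝ) (M : ℕ) (x : ℝ) : ℝ :=
  ∑ k ∈ Finset.range M,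
    Set.indicator (Set.Ioc ((k : ℝ) / M) (((k : ℝ) + 1) / M))
      (fun _ => (M : ℝ) * ∫ u in Set.Ioc ((k : ℝ) / M) (((k : ℝ) + 1) / M), f u) x

open Filter Topology in
theorem continuousOn_of_dist_le_mul_rpow {X Y : Type*} [PseudoMetricSpace X] [PseudoMetricSpace Y]
    {f : X → Y} {s : Set X} {c α : ℝ} (hα : 0 < α)
    (h : ∀ x ∈ s, ∀ y ∈ s, dist (f x) (f y) ≤ c * dist x y ^ α) : ContinuousOn f s := by
  intro x hx
  rw [ContinuousWithinAt, tendsto_iff_dist_tendsto_zero]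
  have hlim : Tendsto (fun y => c * dist y x ^ α) (𝓝[s] x) (𝓝 0) := by
    have := (((continuous_id.dist (continuous_const (y := x))).rpow_const
      fun _ => Or.inr hα.le).const_mul c).tendsto x
    simpa [Real.zero_rpow hα.ne'] using this.mono_left nhdsWithin_le_nhds
  exact squeeze_zero' (Eventually.of_forall fun _ => dist_nonneg)
    (eventually_nhdsWithin_of_forall fun y hy => h y hy x hx) hlim

theorem norm_sub_setAverage_le {α E : Type*} [MeasurableSpace α] [NormedAddCommGroup E]
    [NormedSpace ℝ E] [CompleteSpace E] {μ : Measure α} {s : Set α} {f : α → E} {x : α} {C : ℝ}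
    (hpos : 0 < μ.real s) (hf : IntegrableOn f s μ) (h : ∀ u ∈ s, ‖f x - f u‖ ≤ C) :
    ‖f x - ⨍ u in s, f u ∂μ‖ ≤ C := by
  have hs : μ s < ⊤ := (ENNReal.toReal_pos_iff.1 hpos).2
  have hsub : f x - ⨍ u in s, f u ∂μ = (μ.real s)⁻¹ • ∫ u in s, (f x - f u) ∂μ := by
    rw [integral_sub (integrableOn_const (C := f x) hs.ne) hf, setIntegral_const, smul_sub,
      smul_smul, inv_mul_cancel₀ hpos.ne', one_smul, setAverage_eq]
  calc ‖f x - ⨍ u in s, f u ∂μ‖ = (μ.real s)⁻¹ * ‖∫ u in s, (f x - f u) ∂μ‖ := by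
        rw [hsub, norm_smul, Real.norm_of_nonneg (inv_nonneg.2 hpos.le)]
    _ ≤ (μ.real s)⁻¹ * (C * μ.real s) := by
        gcongr; exact norm_setIntegral_le_of_norm_le_const hs h
    _ = C := by field_simp

def histBin (M k : ℕ) : Set ℝ := Ioc ((k : ℝ) / M) (((k : ℝ) + 1) / M)

section HistBin

variable {M k : ℕ}

theorem mem_histBin_iff (hM : 0 < M) {x : ℝ} : x ∈ histBin M k ↔ ⌈x * M⌉₊ = k + 1 := by
  have hM' : (0 : ℝ) < M := by exact_mod_cast hM
  rw [Nat.ceil_eq_iff k.succ_ne_zero, histBin, mem_Ioc, div_lt_iff₀ hM', le_div_iff₀ hM']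
  push_cast
  simp

theorem exists_mem_histBin (hM : 0 < M) {x : ℝ} (hx : x ∈ Ioc (0 : ℝ) 1) :
    ∃ k < M, x ∈ histBin M k := by
  have hM' : (0 : ℝ) < M := by exact_mod_cast hM
  have hpos : 0 < ⌈x * M⌉₊ := Nat.ceil_pos.2 (mul_pos hx.1 hM')
  have hle : ⌈x * M⌉₊ ≤ M := Nat.ceil_le.2 (mul_le_of_le_one_left hM'.le hx.2)
  exact ⟨⌈x * M⌉₊ - 1, by omega, (mem_histBin_iff hM).2 (by omega)⟩

theorem histBin_subset_Icc (hk : k < M) : histBin M k ⊆ Icc 0 1 := by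
  have hM' : (0 : ℝ) < M := by exact_mod_cast (k.zero_le.trans_lt hk)
  have hk' : (k : ℝ) + 1 ≤ M := by exact_mod_cast hk
  refine Ioc_subset_Icc_self.trans (Icc_subset_Icc (by positivity) ?_)
  rwa [div_le_one hM']

theorem volume_real_histBin (hM : 0 < M) : volume.real (histBin M k) = (M : ℝ)⁻¹ := by
  have hM' : (0 : ℝ) < M := by exact_mod_cast hM
  rw [histBin, Real.volume_real_Ioc_of_le (by gcongr; linarith)]
  field_simp
  ring

theorem histApprox_eq_setAverage {f : ℝ → ℝ} (hk : k < M) {x : ℝ} (hx : x ∈ histBin M k) :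
    histApprox f M x = ⨍ u in histBin M k, f u := by
  have hM : 0 < M := k.zero_le.trans_lt hk
  rw [histApprox, Finset.sum_eq_single_of_mem k (Finset.mem_range.2 hk), ← histBin,
    indicator_of_mem hx, setAverage_eq, volume_real_histBin hM, inv_inv, smul_eq_mul]
  intro j _ hjk
  refine indicator_of_notMem (fun hxj => hjk ?_) _
  have := ((mem_histBin_iff hM).1 hx).symm.trans ((mem_histBin_iff hM).1 hxj)
  omega

theorem abs_sub_le_of_mem_histBin {x y : ℝ} (hx : x ∈ histBin M k) (hy : y ∈ histBin M k) :
    |x - y| ≤ (M : ℝ)⁻¹ := by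
  have hlen : ((k : ℝ) + 1) / M - k / M = (M : ℝ)⁻¹ := by ring
  rw [abs_sub_le_iff]
  constructor <;> linarith [hx.1, hx.2, hy.1, hy.2]

theorem abs_sub_histApprox_le {f : ℝ → ℝ} {c α : ℝ} (hc : 0 ≤ c) (hα : 0 ≤ α)
    (hf : IntegrableOn f (Icc 0 1))
    (hHolder : ∀ x ∈ Icc (0 : ℝ) 1, ∀ y ∈ Icc (0 : ℝ) 1, |f x - f y| ≤ c * |x - y| ^ α)
    (hM : 0 < M) {x : ℝ} (hx : x ∈ Ioc (0 : ℝ) 1) :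
    |f x - histApprox f M x| ≤ c * (M : ℝ) ^ (-α) := by
  obtain ⟨k, hk, hxk⟩ := exists_mem_histBin hM hx
  rw [histApprox_eq_setAverage hk hxk, Real.rpow_neg (Nat.cast_nonneg M),
    ← Real.inv_rpow (Nat.cast_nonneg M)]
  refine norm_sub_setAverage_le (by rw [volume_real_histBin hM]; positivity)
    (hf.mono_set (histBin_subset_Icc hk)) fun u hu => ?_
  calc |f x - f u| ≤ c * |x - u| ^ α :=
        hHolder x (histBin_subset_Icc hk hxk) u (histBin_subset_Icc hk hu)
    _ ≤ c * (M : ℝ)⁻¹ ^ α := by gcongr; exact abs_sub_le_of_mem_histBin hxk hu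

end HistBin

theorem histApprox_bias_bound_general (f : ℝ → ℝ) (c α : ℝ) (hc : 0 < c)
    (hα : 0 < α)
    (hHolder : ∀ x ∈ Set.Icc (0 : ℝ) 1, ∀ y ∈ Set.Icc (0 : ℝ) 1,
      |f x - f y| ≤ c * |x - y| ^ α)
    (M : ℕ) (hM : 1 ≤ M) :
    (∫ x in Set.Ioc (0 : ℝ) 1, (f x - histApprox f M x)^2)
      ≤ c^2 * (M : ℝ) ^ (-(2 * α)) := by
  have hf : IntegrableOn f (Icc 0 1) :=
    (continuousOn_of_dist_le_mul_rpow hα hHolder).integrableOn_Icc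
  have hsq : ∀ x ∈ Ioc (0 : ℝ) 1,
      ‖(f x - histApprox f M x) ^ 2‖ ≤ c ^ 2 * (M : ℝ) ^ (-(2 * α)) := by
    intro x hx
    rw [Real.norm_of_nonneg (sq_nonneg _), ← sq_abs,
      show -(2 * α) = -α * (2 : ℕ) by push_cast; ring, Real.rpow_mul (Nat.cast_nonneg M),
      Real.rpow_natCast, ← mul_pow]
    exact pow_le_pow_left₀ (abs_nonneg _) (abs_sub_histApprox_le hc.le hα.le hf hHolder hM hx) 2
  calc (∫ x in Ioc (0 : ℝ) 1, (f x - histApprox f M x) ^ 2)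
      ≤ c ^ 2 * (M : ℝ) ^ (-(2 * α)) * volume.real (Ioc (0 : ℝ) 1) :=
        (le_abs_self _).trans (norm_setIntegral_le_of_norm_le_const measure_Ioc_lt_top hsq)
    _ = c ^ 2 * (M : ℝ) ^ (-(2 * α)) := by simp

/-- Histogram bias bound for Hölder functions: if `|f(x) − f(y)| ≤ c|x−y|^α` on `[0,1]`,
then `∫₀¹ (f − f̄)² ≤ c² M^{−2α}`. -/
theorem histApprox_bias_bound (f : ℝ → ℝ) (c α : ℝ) (hc : 0 < c)
    (hα : 0 < α) (hα1 : α ≤ 1)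
    (hHolder : ∀ x ∈ Set.Icc (0 : ℝ) 1, ∀ y ∈ Set.Icc (0 : ℝ) 1,
      |f x - f y| ≤ c * |x - y| ^ α)
    (M : ℕ) (hM : 1 ≤ M) :
    (∫ x in Set.Ioc (0 : ℝ) 1, (f x - histApprox f M x)^2)
      ≤ c^2 * (M : ℝ) ^ (-(2 * α)) :=
  histApprox_bias_bound_general f c α hc hα hHolder M hM
end

section
/- Let m ≥ 1 and a_1, …, a_{2m} ∈ ℝ. Then max over all sign vectors ξ ∈ {−1, 1}^{2m} with Σ_{k} ξ_k = 0 of Σ_{k=1}^{2m} ξ_k a_k equals min over η ∈ ℝ of Σ_{k=1}^{2m} |a_k − η|. In particular: (i) for every balanced sign vector ξ and every η ∈ ℝ, Σ ξ_k a_k ≤ Σ |a_k − η|; and (ii) there exist a balanced sign vector ξ and η ∈ ℝ achieving equality. -/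
/-! Since `∑ ξ_k = 0`, `∑ ξ_k a_k = ∑ ξ_k (a_k - η) ≤ ∑ |a_k - η|` for every `η`. Equality holds
when `ξ_k` is the sign of `a_k - η`; taking `η` a median of the `a_k` (sort them, give the lower
half the sign `-1` and the upper half `+1`) makes this sign vector balanced. -/

open Finset

section SignedSums

variable {ι : Type*} [Fintype ι] {ξ a : ι → ℝ}

theorem sum_mul_eq_sum_mul_sub (hξ : ∑ k, ξ k = 0) (η : ℝ) :
    ∑ k, ξ k * a k = ∑ k, ξ k * (a k - η) := by
  simp only [mul_sub, sum_sub_distrib, ← sum_mul, hξ, zero_mul, sub_zero]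

theorem sum_mul_le_sum_abs_sub (hξ₁ : ∀ k, |ξ k| ≤ 1) (hξ : ∑ k, ξ k = 0) (η : ℝ) :
    ∑ k, ξ k * a k ≤ ∑ k, |a k - η| := by
  rw [sum_mul_eq_sum_mul_sub hξ η]
  refine sum_le_sum fun k _ => ?_
  calc ξ k * (a k - η) ≤ |ξ k| * |a k - η| := by rw [← abs_mul]; exact le_abs_self _
    _ ≤ |a k - η| := mul_le_of_le_one_left (abs_nonneg _) (hξ₁ k)

theorem sum_mul_eq_sum_abs_sub {η : ℝ} (hξ : ∑ k, ξ k = 0)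
    (h : ∀ k, ξ k * (a k - η) = |a k - η|) :
    ∑ k, ξ k * a k = ∑ k, |a k - η| := by
  rw [sum_mul_eq_sum_mul_sub hξ η]
  exact sum_congr rfl fun k _ => h k

end SignedSums

theorem sum_fin_two_mul_ite_le (m : ℕ) :
    ∑ i : Fin (2 * m), (if m ≤ (i : ℕ) then (1 : ℝ) else -1) = 0 := by
  rw [Fin.sum_univ_eq_sum_range (fun i => if m ≤ i then (1 : ℝ) else -1), two_mul,
    sum_range_add]
  simp [sum_ite_of_false]

theorem ite_le_mul_sub_eq_abs_of_monotone {m : ℕ} {b : Fin (2 * m) → ℝ} (hb : Monotone b)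
    (hm : m < 2 * m) (i : Fin (2 * m)) :
    (if m ≤ (i : ℕ) then 1 else -1) * (b i - b ⟨m, hm⟩) = |b i - b ⟨m, hm⟩| := by
  split_ifs with h
  · have : b ⟨m, hm⟩ ≤ b i := hb (Fin.mk_le_of_le_val h)
    rw [one_mul, abs_of_nonneg (sub_nonneg.2 this)]
  · have : b i ≤ b ⟨m, hm⟩ := hb (Fin.le_iff_val_le_val.2 (by simp; omega))
    rw [neg_one_mul, abs_of_nonpos (sub_nonpos.2 this)]

theorem exists_balanced_signs_mul_sub_eq_abs {m : ℕ} (hm : 1 ≤ m) (a : Fin (2 * m) → ℝ) :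
    ∃ ξ : Fin (2 * m) → ℝ, (∀ k, ξ k = 1 ∨ ξ k = -1) ∧ ∑ k, ξ k = 0 ∧
      ∃ η : ℝ, ∀ k, ξ k * (a k - η) = |a k - η| := by
  have hm' : m < 2 * m := by omega
  obtain ⟨σ, hσ⟩ : ∃ σ : Equiv.Perm (Fin (2 * m)), Monotone (a ∘ σ) :=
    ⟨_, Tuple.monotone_sort a⟩
  refine ⟨fun k => if m ≤ ((σ.symm k : Fin (2 * m)) : ℕ) then 1 else -1,
    fun k => by dsimp only; split_ifs <;> simp, ?_, a (σ ⟨m, hm'⟩), fun k => ?_⟩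
  · rw [← Equiv.sum_comp σ]
    simpa only [Equiv.symm_apply_apply] using sum_fin_two_mul_ite_le m
  · have := ite_le_mul_sub_eq_abs_of_monotone hσ hm' (σ.symm k)
    simpa only [Function.comp_apply, Equiv.apply_symm_apply] using this

/-- Extremal identity for balanced signs: the maximum of `Σ ξ_k a_k` over sign vectors
`ξ ∈ {−1,1}^{2m}` with `Σ ξ_k = 0` equals the minimum over `η ∈ ℝ` of `Σ |a_k − η|`:
(i) every balanced sign vector and every `η` satisfy the inequality, and
(ii) some balanced sign vector and some `η` achieve equality. -/
theorem balanced_signs_extremal_identity (m : ℕ) (hm : 1 ≤ m)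
    (a : Fin (2 * m) → ℝ) :
    (∀ ξ : Fin (2 * m) → ℝ, (∀ k, ξ k = 1 ∨ ξ k = -1) → (∑ k, ξ k = 0) →
      ∀ η : ℝ, ∑ k, ξ k * a k ≤ ∑ k, |a k - η|)
    ∧ (∃ ξ : Fin (2 * m) → ℝ, (∀ k, ξ k = 1 ∨ ξ k = -1) ∧ (∑ k, ξ k = 0) ∧
        ∃ η : ℝ, ∑ k, ξ k * a k = ∑ k, |a k - η|) := by
  refine ⟨fun ξ hξ hsum η => sum_mul_le_sum_abs_sub (fun k => ?_) hsum η, ?_⟩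
  · rcases hξ k with h | h <;> simp [h]
  · obtain ⟨ξ, hξ, hsum, η, hη⟩ := exists_balanced_signs_mul_sub_eq_abs hm a
    exact ⟨ξ, hξ, hsum, η, sum_mul_eq_sum_abs_sub hsum hη⟩
end

section
/- Let (Ω, ℱ, P) be a probability space, let p : Ω → [0,1] be measurable, and let Y : Ω → {0,1} be a random variable satisfying E[Y | σ(p)] = p almost surely. Assume 0 < E[p] < 1. Then E[p · 1{Y=1}]/P(Y=1) − E[p · 1{Y=0}]/P(Y=0) = Var(p) / ( E[p](1 − E[p]) ). Equivalently, E[p | Y=1] − E[p | Y=0] = Var(p)/(E[p](1 − E[p])). -/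
/-!
Conditioning on `σ(p)` turns `Y` into `p` inside any expectation against a `σ(p)`-measurable
weight, so `P(Y = 1) = E[p]` and `E[p; Y = 1] = E[p²]`; complementarily `P(Y = 0) = 1 - E[p]`
and `E[p; Y = 0] = E[p] - E[p²]`. The gap of the two posterior means is then
`E[p²]/E[p] - (E[p] - E[p²])/(1 - E[p]) = (E[p²] - E[p]²)/(E[p](1 - E[p]))`.
-/

open MeasureTheory ProbabilityTheory

lemma integral_mul_eq_integral_mul_of_condExp_ae_eq {Ω : Type*} {m m₀ : MeasurableSpace Ω}
    {μ : Measure Ω} {g Y p : Ω → ℝ} (hm : m ≤ m₀) [SigmaFinite (μ.trim hm)]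
    (hg : StronglyMeasurable[m] g) (hgY : Integrable (g * Y) μ) (hY : Integrable Y μ)
    (hcond : μ[Y | m] =ᵐ[μ] p) :
    ∫ ω, g ω * Y ω ∂μ = ∫ ω, g ω * p ω ∂μ := by
  calc ∫ ω, g ω * Y ω ∂μ = ∫ ω, μ[g * Y | m] ω ∂μ := (integral_condExp hm).symm
    _ = ∫ ω, g ω * p ω ∂μ := integral_congr_ae <|
      (condExp_mul_of_stronglyMeasurable_left hg hgY hY).trans (Filter.EventuallyEq.rfl.mul hcond)

section Bernoulli

variable {Ω : Type*} [MeasurableSpace Ω] {μ : Measure Ω} {Y : Ω → ℝ}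

lemma setIntegral_eq_one_eq_integral_mul (hY : Measurable Y) (hY01 : ∀ ω, Y ω = 0 ∨ Y ω = 1)
    (f : Ω → ℝ) : ∫ ω in {ω | Y ω = 1}, f ω ∂μ = ∫ ω, f ω * Y ω ∂μ := by
  rw [← integral_indicator (s := {ω | Y ω = 1}) (hY (measurableSet_singleton 1))]
  congr 1 with ω
  rcases hY01 ω with h | h <;> simp [h]

lemma setIntegral_eq_zero_eq_integral_mul_one_sub (hY : Measurable Y)
    (hY01 : ∀ ω, Y ω = 0 ∨ Y ω = 1) (f : Ω → ℝ) :
    ∫ ω in {ω | Y ω = 0}, f ω ∂μ = ∫ ω, f ω * (1 - Y ω) ∂μ := by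
  rw [← integral_indicator (s := {ω | Y ω = 0}) (hY (measurableSet_singleton 0))]
  congr 1 with ω
  rcases hY01 ω with h | h <;> simp [h]

lemma integrable_of_eq_zero_or_eq_one [IsFiniteMeasure μ] (hY : Measurable Y)
    (hY01 : ∀ ω, Y ω = 0 ∨ Y ω = 1) : Integrable Y μ :=
  .of_bound hY.aestronglyMeasurable 1 <| .of_forall fun ω => by rcases hY01 ω with h | h <;> simp [h]

lemma setIntegral_eq_zero_eq_integral_sub (hY : Measurable Y) (hY01 : ∀ ω, Y ω = 0 ∨ Y ω = 1)
    {f : Ω → ℝ} (hf : Integrable f μ) (hfY : Integrable (fun ω => f ω * Y ω) μ) :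
    ∫ ω in {ω | Y ω = 0}, f ω ∂μ = ∫ ω, f ω ∂μ - ∫ ω, f ω * Y ω ∂μ := by
  simp_rw [setIntegral_eq_zero_eq_integral_mul_one_sub hY hY01, mul_one_sub]
  exact integral_sub hf hfY

lemma measureReal_eq_one_eq_integral (hY : Measurable Y) (hY01 : ∀ ω, Y ω = 0 ∨ Y ω = 1) :
    μ.real {ω | Y ω = 1} = ∫ ω, Y ω ∂μ := by
  simpa using setIntegral_eq_one_eq_integral_mul (μ := μ) hY hY01 1

lemma measureReal_eq_zero_eq_one_sub_integral [IsProbabilityMeasure μ] (hY : Measurable Y)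
    (hY01 : ∀ ω, Y ω = 0 ∨ Y ω = 1) :
    μ.real {ω | Y ω = 0} = 1 - ∫ ω, Y ω ∂μ := by
  simpa using setIntegral_eq_zero_eq_integral_sub (μ := μ) hY hY01 (integrable_const 1)
    (by simpa using integrable_of_eq_zero_or_eq_one hY hY01)

end Bernoulli

/-- Posterior-mean gap for a Bernoulli observation with random success probability:
if `E[Y | σ(p)] = p` a.s., with `Y ∈ {0,1}` and `p ∈ [0,1]`, then
`E[p | Y = 1] − E[p | Y = 0] = Var(p) / (E[p](1 − E[p]))`. -/
theorem posterior_mean_gap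
    {Ω : Type*} [MeasurableSpace Ω] (μ : Measure Ω) [IsProbabilityMeasure μ]
    (p Y : Ω → ℝ) (hp : Measurable p) (hY : Measurable Y)
    (hp01 : ∀ ω, p ω ∈ Set.Icc (0 : ℝ) 1)
    (hY01 : ∀ ω, Y ω = 0 ∨ Y ω = 1)
    (hcond : μ[Y | MeasurableSpace.comap p inferInstance] =ᵐ[μ] p)
    (hpos : 0 < ∫ ω, p ω ∂μ) (hlt : ∫ ω, p ω ∂μ < 1) :
    (∫ ω in {ω | Y ω = 1}, p ω ∂μ) / (μ {ω | Y ω = 1}).toReal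
      - (∫ ω in {ω | Y ω = 0}, p ω ∂μ) / (μ {ω | Y ω = 0}).toReal
    = variance p μ / ((∫ ω, p ω ∂μ) * (1 - ∫ ω, p ω ∂μ)) := by
  have hm := hp.comap_le
  have hp_bdd : ∀ᵐ ω ∂μ, ‖p ω‖ ≤ 1 := .of_forall fun ω =>
    abs_le.2 ⟨by linarith [(hp01 ω).1], (hp01 ω).2⟩
  have hYint := integrable_of_eq_zero_or_eq_one hY hY01 (μ := μ)
  have hpint : Integrable p μ := .of_bound hp.aestronglyMeasurable 1 hp_bdd
  have hpYint : Integrable (fun ω => p ω * Y ω) μ := hYint.bdd_mul hp.aestronglyMeasurable hp_bdd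
  have hEY : ∫ ω, Y ω ∂μ = ∫ ω, p ω ∂μ :=
    (integral_condExp hm).symm.trans (integral_congr_ae hcond)
  have hEpY : ∫ ω, p ω * Y ω ∂μ = ∫ ω, p ω * p ω ∂μ :=
    integral_mul_eq_integral_mul_of_condExp_ae_eq hm (comap_measurable p).stronglyMeasurable
      hpYint hYint hcond
  have hvar : variance p μ = ∫ ω, p ω * p ω ∂μ - (∫ ω, p ω ∂μ) ^ 2 := by
    simp [variance_eq_sub (MemLp.of_bound hp.aestronglyMeasurable 1 hp_bdd), sq]
  rw [setIntegral_eq_one_eq_integral_mul hY hY01,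
    setIntegral_eq_zero_eq_integral_sub hY hY01 hpint hpYint, ← measureReal_def, ← measureReal_def,
    measureReal_eq_one_eq_integral hY hY01, measureReal_eq_zero_eq_one_sub_integral hY hY01,
    hEY, hEpY, hvar]
  field_simp [hpos.ne', sub_ne_zero.mpr hlt.ne']
  ring
end

section
/- Let 0 < ξ < 1/2 and ν > 0 with ν + ξ > 1 (hence 2ν − 1 > 0). Then there exists a constant C, depending only on ξ and ν, such that for every integer n ≥ 2, taking m = ⌈n^{1/(2ν−1)}⌉, one has (1/n) Σ_{i=1}^m i^{−2ξ} + ( Σ_{i=m+1}^∞ i^{−(ν+ξ)} )² ≤ C · n^{−1 + (1−2ξ)/(2ν−1)}. -/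
/-!
Both terms are controlled by comparing with the antiderivative of `t ^ (-s)`: one mean value
step per summand gives `(1 - s) i ^ (-s) ≤ i ^ (1 - s) - (i - 1) ^ (1 - s)`, with the inequality
reversed when `s > 1`, and the sums telescope. Hence the variance term is
`O(m ^ (1 - 2ξ) / n)` and the squared bias `O(m ^ (2 - 2ν - 2ξ))`; at `m ≈ n ^ (1 / (2ν - 1))`
both equal `n ^ (-1 + (1 - 2ξ) / (2ν - 1))`.
-/

open Real Finset

lemma mul_rpow_neg_mul_sub_le_rpow_sub_rpow {s a b : ℝ} (hs0 : 0 ≤ s) (hs1 : s ≤ 1)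
    (ha : 0 ≤ a) (hab : a < b) :
    (1 - s) * b ^ (-s) * (b - a) ≤ b ^ (1 - s) - a ^ (1 - s) := by
  have hderiv : HasDerivAt (fun t : ℝ ↦ t ^ (1 - s)) ((1 - s) * b ^ (-s)) b := by
    simpa only [sub_sub_cancel_left] using
      hasDerivAt_rpow_const (p := 1 - s) (Or.inl (ha.trans_lt hab).ne')
  have hslope := (concaveOn_rpow (by linarith) (by linarith)).le_slope_of_hasDerivAt
    (Set.mem_Ici.2 ha) (Set.mem_Ici.2 (ha.trans hab.le)) hab hderiv
  rwa [slope_def_field, le_div_iff₀ (sub_pos.2 hab)] at hslope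

lemma mul_rpow_neg_mul_sub_le_rpow_sub_rpow_of_one_le {s a b : ℝ} (hs : 1 ≤ s) (ha : 0 < a)
    (hab : a ≤ b) :
    (s - 1) * b ^ (-s) * (b - a) ≤ a ^ (1 - s) - b ^ (1 - s) := by
  have hne : ∀ t ∈ Set.Icc a b, t ≠ 0 := fun t ht ↦ (ha.trans_le ht.1).ne'
  have hderiv_le : ∀ t ∈ interior (Set.Icc a b),
      deriv (fun t : ℝ ↦ t ^ (1 - s)) t ≤ (1 - s) * b ^ (-s) := by
    rw [interior_Icc]
    intro t ht
    rw [Real.deriv_rpow_const, sub_sub_cancel_left]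
    exact mul_le_mul_of_nonpos_left (rpow_le_rpow_of_nonpos (ha.trans ht.1) ht.2.le (by linarith))
      (by linarith)
  have hmvt := (convex_Icc a b).image_sub_le_mul_sub_of_deriv_le
    (fun t ht ↦ (continuousAt_rpow_const t _ (Or.inl (hne t ht))).continuousWithinAt)
    (fun t ht ↦
      (differentiableAt_rpow_const_of_ne _ (hne t (interior_subset ht))).differentiableWithinAt)
    hderiv_le a (Set.left_mem_Icc.2 hab) b (Set.right_mem_Icc.2 hab) hab
  linear_combination hmvt

lemma sum_Icc_rpow_neg_le {s : ℝ} (hs0 : 0 ≤ s) (hs1 : s < 1) (m : ℕ) :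
    ∑ i ∈ Icc 1 m, (i : ℝ) ^ (-s) ≤ (m : ℝ) ^ (1 - s) / (1 - s) := by
  rw [le_div_iff₀ (sub_pos.2 hs1)]
  induction m with
  | zero => simp [zero_rpow (sub_pos.2 hs1).ne']
  | succ m ih =>
    have hstep :=
      mul_rpow_neg_mul_sub_le_rpow_sub_rpow hs0 hs1.le m.cast_nonneg (lt_add_one (m : ℝ))
    rw [sum_Icc_succ_top (by omega), add_mul]
    push_cast
    linear_combination ih + hstep

lemma tsum_rpow_neg_le {s : ℝ} (hs : 1 < s) {m : ℕ} (hm : 0 < m) :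
    ∑' j : ℕ, ((m + 1 + j : ℕ) : ℝ) ^ (-s) ≤ (m : ℝ) ^ (1 - s) / (s - 1) := by
  refine tsum_le_of_sum_range_le (fun _ ↦ by positivity) fun N ↦ ?_
  rw [le_div_iff₀ (sub_pos.2 hs), sum_mul]
  calc ∑ j ∈ range N, ((m + 1 + j : ℕ) : ℝ) ^ (-s) * (s - 1)
      ≤ ∑ j ∈ range N, (((m + j : ℕ) : ℝ) ^ (1 - s) - ((m + (j + 1) : ℕ) : ℝ) ^ (1 - s)) := by
        refine sum_le_sum fun j _ ↦ ?_
        have hgap : ((m + (j + 1) : ℕ) : ℝ) - (m + j : ℕ) = 1 := by push_cast; ring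
        have hstep := mul_rpow_neg_mul_sub_le_rpow_sub_rpow_of_one_le hs.le
          (a := (m + j : ℕ)) (b := (m + (j + 1) : ℕ)) (by positivity) (by gcongr; omega)
        rw [hgap, mul_one, mul_comm] at hstep
        rwa [show m + 1 + j = m + (j + 1) by omega]
    _ = (m : ℝ) ^ (1 - s) - ((m + N : ℕ) : ℝ) ^ (1 - s) := by
        rw [sum_range_sub' (fun j ↦ ((m + j : ℕ) : ℝ) ^ (1 - s))]
        simp
    _ ≤ (m : ℝ) ^ (1 - s) := sub_le_self _ (by positivity)

lemma sum_Icc_ceil_rpow_neg_le {s : ℝ} (hs0 : 0 ≤ s) (hs1 : s < 1) {x : ℝ} (hx : 2⁻¹ ≤ x) :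
    ∑ i ∈ Icc 1 ⌈x⌉₊, (i : ℝ) ^ (-s) ≤ 2 ^ (1 - s) / (1 - s) * x ^ (1 - s) := by
  calc ∑ i ∈ Icc 1 ⌈x⌉₊, (i : ℝ) ^ (-s) ≤ (⌈x⌉₊ : ℝ) ^ (1 - s) / (1 - s) :=
        sum_Icc_rpow_neg_le hs0 hs1 _
    _ ≤ (2 * x) ^ (1 - s) / (1 - s) := by gcongr; exact Nat.ceil_le_two_mul hx
    _ = 2 ^ (1 - s) / (1 - s) * x ^ (1 - s) := by
        rw [mul_rpow zero_le_two (by linarith)]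
        ring

lemma tsum_ceil_rpow_neg_le {s : ℝ} (hs : 1 < s) {x : ℝ} (hx : 0 < x) :
    ∑' j : ℕ, ((⌈x⌉₊ + 1 + j : ℕ) : ℝ) ^ (-s) ≤ x ^ (1 - s) / (s - 1) :=
  (tsum_rpow_neg_le hs (Nat.ceil_pos.2 hx)).trans <|
    div_le_div_of_nonneg_right (rpow_le_rpow_of_nonpos hx (Nat.le_ceil x) (by linarith))
      (by linarith)

theorem truncated_series_rate_general
    (ξ ν : ℝ) (hξ0 : 0 < ξ) (hξ : ξ < 1/2) (hνξ : 1 < ν + ξ) :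
    ∃ C : ℝ, ∀ n : ℕ, 2 ≤ n →
      (1 / (n : ℝ)) * (∑ i ∈ Finset.Icc 1 ⌈(n : ℝ) ^ (1 / (2 * ν - 1))⌉₊, (i : ℝ) ^ (-(2 * ξ)))
        + (∑' j : ℕ, ((⌈(n : ℝ) ^ (1 / (2 * ν - 1))⌉₊ + 1 + j : ℕ) : ℝ) ^ (-(ν + ξ)))^2
      ≤ C * (n : ℝ) ^ (-1 + (1 - 2 * ξ) / (2 * ν - 1)) := by
  refine ⟨2 ^ (1 - 2 * ξ) / (1 - 2 * ξ) + 1 / (ν + ξ - 1) ^ 2, fun n hn ↦ ?_⟩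
  have hν : 0 < 2 * ν - 1 := by linarith
  have hn1 : (1 : ℝ) ≤ n := by exact_mod_cast (by omega : 1 ≤ n)
  have hn0 : (0 : ℝ) < n := by linarith
  set x := (n : ℝ) ^ (1 / (2 * ν - 1))
  have hx : 1 ≤ x := one_le_rpow hn1 (by positivity)
  have hvar_rate : 1 / (n : ℝ) * x ^ (1 - 2 * ξ) = n ^ (-1 + (1 - 2 * ξ) / (2 * ν - 1)) := by
    rw [← rpow_mul hn0.le, one_div (n : ℝ), ← rpow_neg_one, ← rpow_add hn0]
    ring_nf
  have hbias_rate : (x ^ (1 - (ν + ξ))) ^ 2 = n ^ (-1 + (1 - 2 * ξ) / (2 * ν - 1)) := by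
    rw [← rpow_mul hn0.le, ← rpow_natCast, ← rpow_mul hn0.le]
    congr 1
    field_simp
    ring
  have hvar := mul_le_mul_of_nonneg_left
    (sum_Icc_ceil_rpow_neg_le (s := 2 * ξ) (x := x) (by linarith) (by linarith) (by linarith))
    (one_div_nonneg.2 hn0.le)
  have hbias := pow_le_pow_left₀ (tsum_nonneg fun _ ↦ by positivity)
    (tsum_ceil_rpow_neg_le hνξ (by linarith : 0 < x)) 2
  calc _ ≤ 1 / (n : ℝ) * (2 ^ (1 - 2 * ξ) / (1 - 2 * ξ) * x ^ (1 - 2 * ξ))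
        + (x ^ (1 - (ν + ξ)) / (ν + ξ - 1)) ^ 2 := add_le_add hvar hbias
    _ = _ := by
        rw [div_pow, hbias_rate, ← hvar_rate]
        ring

/-- Rate computation for the truncated-series estimator with weights `α_i = i^{−ξ}` and
bounds `c_i = i^{−ν}`: with the cutoff `m = ⌈n^{1/(2ν−1)}⌉`, the variance term
`(1/n) Σ_{i=1}^m i^{−2ξ}` plus the squared-bias term `(Σ_{i=m+1}^∞ i^{−(ν+ξ)})²` is of
order `n^{−1+(1−2ξ)/(2ν−1)}`. -/
theorem truncated_series_rate
    (ξ ν : ℝ) (hξ0 : 0 < ξ) (hξ : ξ < 1/2) (hν : 0 < ν) (hνξ : 1 < ν + ξ) :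
    ∃ C : ℝ, ∀ n : ℕ, 2 ≤ n →
      (1 / (n : ℝ)) * (∑ i ∈ Finset.Icc 1 ⌈(n : ℝ) ^ (1 / (2 * ν - 1))⌉₊, (i : ℝ) ^ (-(2 * ξ)))
        + (∑' j : ℕ, ((⌈(n : ℝ) ^ (1 / (2 * ν - 1))⌉₊ + 1 + j : ℕ) : ℝ) ^ (-(ν + ξ)))^2
      ≤ C * (n : ℝ) ^ (-1 + (1 - 2 * ξ) / (2 * ν - 1)) :=
  truncated_series_rate_general ξ ν hξ0 hξ hνξ
end
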